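/- Let G=(V,E') be a finite simple undirected graph and let s,z∈V be two designated vertices such that every vertex of V∖{s,z} has degree at least 2 in G. Let F⊆E' be a feedback edge set of G (i.e., G−F is acyclic) with |F|=f. Then the number of vertices of G having degree at least 3 is at most 2f+2. -/

import Mathlib

open SimpleGraph Walk

lemma forest_edge_head {V : Type} {H : SimpleGraph V} (hH : H.IsAcyclic)
    {ρ v w : V} (h : H.Adj v w) (pv : H.Walk v ρ) (pw : H.Walk w ρ)
    (hpv : pv.IsPath) (hpw : pw.IsPath) :
    pv.edges.head? = some s(v, w) ∨ pw.edges.head? = some s(v, w) := by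
  classical
  by_cases hm : v ∈ pw.support
  · right
    have hq : (pw.takeUntil v hm) = (SimpleGraph.Path.singleton h.symm).1 :=
      congrArg Subtype.val
        (hH.path_unique ⟨pw.takeUntil v hm, hpw.takeUntil hm⟩ (SimpleGraph.Path.singleton h.symm))
    have hspec := Walk.take_spec pw hm
    rw [← hspec, Walk.edges_append, hq]
    simp [SimpleGraph.Path.singleton, Sym2.eq_swap]
  · left
    have heq : pv = Walk.cons h pw :=
      congrArg Subtype.val (hH.path_unique ⟨pv, hpv⟩ ⟨Walk.cons h pw, hpw.cons hm⟩)
    rw [heq]; simp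

lemma forest_card_le {V : Type} [Fintype V] [DecidableEq V] [Nonempty V]
    (H : SimpleGraph V) [Fintype H.edgeSet]
    (hH : H.IsAcyclic) : H.edgeFinset.card ≤ Fintype.card V - 1 := by
  classical
  set r : V → V := fun v => (H.connectedComponentMk v).out with hrdef
  have hmk : ∀ v, H.connectedComponentMk (r v) = H.connectedComponentMk v := by
    intro v; simp [hrdef, SimpleGraph.connectedComponentMk, Quot.out_eq]; rfl
  have hreach : ∀ v, H.Reachable v (r v) := fun v =>
    (SimpleGraph.ConnectedComponent.exact (hmk v)).symm
  have hridem : ∀ v, r (r v) = r v := by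
    intro v
    show (H.connectedComponentMk (r v)).out = r v
    rw [hmk v]
  -- the chosen path from each vertex to its root
  have hP : ∀ v, ∃ p : H.Walk v (r v), p.IsPath := fun v =>
    ((hreach v).symm.elim_path fun q => ⟨q.1.reverse, q.2.reverse⟩)
  choose P hPpath using hP
  set f : V → Sym2 V := fun v => ((P v).edges.head?).getD s(v, v) with hfdef
  -- f sends each non-root to the first edge of its path
  obtain ⟨v₀⟩ := ‹Nonempty V›
  have key : Set.SurjOn f ((Finset.univ.erase (r v₀)) : Finset V) (H.edgeFinset : Set (Sym2 V)) := by
    intro e he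
    simp only [Finset.coe_sort_coe, Set.mem_image, SimpleGraph.mem_edgeFinset,
      Finset.coe_erase, Finset.mem_coe] at *
    induction e using Sym2.ind with
    | _ v w =>
    have hadj : H.Adj v w := he
    have hrw : r w = r v := by
      show (H.connectedComponentMk w).out = (H.connectedComponentMk v).out
      rw [SimpleGraph.ConnectedComponent.sound hadj.reachable]
    have hcases := forest_edge_head hH hadj (P v) ((P w).copy rfl hrw)
      (hPpath v) ((Walk.isPath_copy _ rfl hrw).mpr (hPpath w))
    -- helper: whoever's head is the edge works
    have hne : ∀ x : V, (P x).edges.head? = some s(v, w) → f x = s(v, w) ∧ x ≠ r v₀ := by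
      intro x hx
      constructor
      · show ((P x).edges.head?).getD s(x, x) = s(v, w)
        rw [hx]; rfl
      · intro hxr
        -- then x = r x, so P x is a loop path, hence nil, contradiction
        have hxrx : r x = x := by rw [hxr, hridem]
        have : (⟨(P x).copy rfl hxrx, (Walk.isPath_copy _ rfl hxrx).mpr (hPpath x)⟩ : H.Path x x) = SimpleGraph.Path.nil :=
          SimpleGraph.Path.loop_eq _
        have hnil : (P x).copy rfl hxrx = SimpleGraph.Walk.nil := congrArg Subtype.val this
        have : (P x).edges = [] := by
          have := congrArg SimpleGraph.Walk.edges hnil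
          rw [Walk.edges_copy] at this
          simpa using this
        rw [this] at hx
        simp at hx
    rcases hcases with hc | hc
    · obtain ⟨h1, h2⟩ := hne v hc
      exact ⟨v, by simpa using h2, h1⟩
    · rw [Walk.edges_copy] at hc
      obtain ⟨h1, h2⟩ := hne w hc
      refine ⟨w, by simpa using h2, by rw [h1, Sym2.eq_swap]⟩
  have := Finset.card_le_card_of_surjOn f key
  calc H.edgeFinset.card ≤ (Finset.univ.erase (r v₀)).card := this
    _ = Fintype.card V - 1 := by rw [Finset.card_erase_of_mem (Finset.mem_univ _)]; rfl

theorem statement14 {V : Type} [Fintype V] [DecidableEq V]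
    (G : SimpleGraph V) [DecidableRel G.Adj] (s z : V)
    (hdeg : ∀ u : V, u ≠ s → u ≠ z → 2 ≤ G.degree u)
    (F : Finset (Sym2 V)) (hFsub : ↑F ⊆ G.edgeSet)
    (hF : (G.deleteEdges ↑F).IsAcyclic) :
    (Finset.univ.filter (fun u : V => 3 ≤ G.degree u)).card ≤ 2 * F.card + 2 := by
  classical
  rcases isEmpty_or_nonempty V with hV | hV
  · simp [Finset.filter_eq_empty_iff.mpr (fun u _ => (IsEmpty.false u).elim)]
  set H := G.deleteEdges (↑F) with hHdef
  set A := Finset.univ.filter (fun u : V => 3 ≤ G.degree u) with hA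
  have hsubE : G.edgeFinset ⊆ H.edgeFinset ∪ F := by
    intro e he
    rw [SimpleGraph.mem_edgeFinset] at he
    by_cases hf : e ∈ F
    · exact Finset.mem_union_right _ hf
    · refine Finset.mem_union_left _ ?_
      rw [SimpleGraph.mem_edgeFinset, hHdef, SimpleGraph.edgeSet_deleteEdges]
      exact ⟨he, hf⟩
  have hE1 : G.edgeFinset.card ≤ H.edgeFinset.card + F.card :=
    le_trans (Finset.card_le_card hsubE) (Finset.card_union_le _ _)
  have hE2 : H.edgeFinset.card ≤ Fintype.card V - 1 := forest_card_le H hF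
  have hsum : ∑ v, G.degree v = 2 * G.edgeFinset.card :=
    SimpleGraph.sum_degrees_eq_twice_card_edges G
  -- pointwise lower bound on degrees
  have hpt : ∀ u : V, (if 3 ≤ G.degree u then 3 else 2)
      ≤ G.degree u + (if u = s ∨ u = z then 2 else 0) := by
    intro u
    by_cases h3 : 3 ≤ G.degree u
    · simp only [if_pos h3]; omega
    · simp only [if_neg h3]
      by_cases hsz : u = s ∨ u = z
      · simp [hsz]
      · push_neg at hsz
        have := hdeg u hsz.1 hsz.2
        simp [hsz]; omega
  have hsum1 : ∑ u, (if 3 ≤ G.degree u then 3 else 2)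
      ≤ ∑ u, (G.degree u + (if u = s ∨ u = z then 2 else 0)) :=
    Finset.sum_le_sum (fun u _ => hpt u)
  have hsz2 : ∑ u : V, (if u = s ∨ u = z then 2 else 0) ≤ 4 := by
    rw [Finset.sum_ite, Finset.sum_const, Finset.sum_const, smul_eq_mul, smul_eq_mul,
      mul_zero, add_zero]
    have hsub : Finset.univ.filter (fun u : V => u = s ∨ u = z) ⊆ {s, z} := by
      intro u hu
      simp only [Finset.mem_filter] at hu
      simp [Finset.mem_insert, hu.2]
    have := Finset.card_le_card hsub
    have h2 : ({s, z} : Finset V).card ≤ 2 := Finset.card_le_two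
    omega
  have hsum2 : ∑ u : V, (if 3 ≤ G.degree u then 3 else 2)
      = 3 * A.card + 2 * (Finset.univ.filter (fun u : V => ¬ 3 ≤ G.degree u)).card := by
    rw [Finset.sum_ite, Finset.sum_const, Finset.sum_const, smul_eq_mul, smul_eq_mul,
      mul_comm, mul_comm _ 2]
  have hsplit : A.card + (Finset.univ.filter (fun u : V => ¬ 3 ≤ G.degree u)).card
      = Fintype.card V :=
    Finset.card_filter_add_card_filter_not _
  have hsumsplit : ∑ u : V, (G.degree u + (if u = s ∨ u = z then 2 else 0))
      = (∑ u, G.degree u) + ∑ u : V, (if u = s ∨ u = z then 2 else 0) :=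
    Finset.sum_add_distrib
  have hn : 1 ≤ Fintype.card V := Fintype.card_pos
  have hfinal := hsum1
  rw [hsum2, hsumsplit, hsum] at hfinal
  omega
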